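/- arXiv:2205.08877 — 5 statements merged into one kernel-verified Lean document; each statement's English description precedes it below -/
import Mathlib

section
/- For any real number λ with 0 ≤ λ ≤ δ, where δ is the unique root of x - x² - log(2-x) = 0 in (1,2), one has λ - λ² ≤ log(2 - λ). -/
open Real Set

lemma direct_part {l : ℝ} (_h0 : 0 ≤ l) (h1 : l ≤ 3/2) :
    l - l ^ 2 ≤ Real.log (2 - l) := by
  have h2 : (0:ℝ) < 2 - l := by linarith
  rw [Real.le_log_iff_exp_le h2]
  have key : Real.exp (l - l ^ 2) * Real.exp (l ^ 2 - l) = 1 := by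
    rw [← Real.exp_add]; ring_nf; exact Real.exp_zero
  have hE : 0 < Real.exp (l ^ 2 - l) := Real.exp_pos _
  -- suffices (2 - l) * exp (l^2 - l) ≥ 1
  have hmain : 1 ≤ (2 - l) * Real.exp (l ^ 2 - l) := by
    rcases le_or_gt l 1 with hc | hc
    · have hb : 1 + (l ^ 2 - l) ≤ Real.exp (l ^ 2 - l) := by
        have := Real.add_one_le_exp (l ^ 2 - l); linarith
      nlinarith [sq_nonneg (1 - l), sq_nonneg l]
    · set t : ℝ := l - 1 with ht
      have htpos : 0 ≤ t + t ^ 2 := by nlinarith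
      have hb := Real.quadratic_le_exp_of_nonneg htpos
      have hEq : l ^ 2 - l = t + t ^ 2 := by rw [ht]; ring
      rw [hEq]
      have ht2 : t ≤ 1/2 := by simp [ht]; linarith
      have ht0 : 0 ≤ t := by simp [ht]; linarith
      have h2l : 2 - l = 1 - t := by rw [ht]; ring
      rw [h2l]
      nlinarith [sq_nonneg t, pow_nonneg ht0 3]
  nlinarith

/-- For all λ ∈ [0, δ], where δ is the unique root in (1,2) of x - x² - log(2-x) = 0,
we have λ - λ² ≤ log(2 - λ). -/
theorem schulz_scalar_ineq (δ : ℝ) (hδ : δ ∈ Set.Ioo (1 : ℝ) 2)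
    (hroot : δ - δ ^ 2 - Real.log (2 - δ) = 0) :
    ∀ l : ℝ, 0 ≤ l → l ≤ δ → l - l ^ 2 ≤ Real.log (2 - l) := by
  intro l h0 hl
  obtain ⟨hδ1, hδ2⟩ := hδ
  rcases le_or_gt l (3/2) with hc | hc
  · exact direct_part h0 hc
  · -- l ∈ (3/2, δ], use antitone of f x = log(2-x) - (x - x^2) on [3/2, δ]
    set f : ℝ → ℝ := fun x => Real.log (2 - x) - (x - x ^ 2) with hf
    have hderiv : ∀ x ∈ interior (Icc (3/2 : ℝ) δ), HasDerivAt f (-(1/(2-x)) - (1 - 2*x)) x := by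
      intro x hx
      rw [interior_Icc] at hx
      have hx2 : 2 - x ≠ 0 := by obtain ⟨ha, hb⟩ := hx; intro h; nlinarith
      have h1 : HasDerivAt (fun x : ℝ => 2 - x) (-1) x := by
        have hh : HasDerivAt (fun y : ℝ => 2 - y) _ x := (hasDerivAt_const x (2:ℝ)).sub (hasDerivAt_id x); simpa using hh
      have h2 : HasDerivAt (fun x : ℝ => Real.log (2 - x)) ((2-x)⁻¹ * (-1)) x :=
        (Real.hasDerivAt_log hx2).comp x h1
      have h3 : HasDerivAt (fun x : ℝ => x - x ^ 2) (1 - 2*x) x := by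
        have hh : HasDerivAt (fun y : ℝ => y - y ^ 2) _ x := (hasDerivAt_id x).sub (hasDerivAt_pow 2 x); simpa using hh
      have : HasDerivAt (fun y : ℝ => Real.log (2 - y) - (y - y ^ 2)) _ x := h2.sub h3
      convert this using 1
      field_simp
    have hanti : AntitoneOn f (Icc (3/2 : ℝ) δ) := by
      apply antitoneOn_of_deriv_nonpos (convex_Icc _ _)
      · apply ContinuousOn.sub
        · apply ContinuousOn.log (by fun_prop)
          intro x hx; obtain ⟨ha, hb⟩ := hx; intro h; nlinarith
        · fun_prop
      · intro x hx
        exact (hderiv x hx).differentiableAt.differentiableWithinAt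
      · intro x hx
        rw [(hderiv x hx).deriv]
        rw [interior_Icc] at hx
        obtain ⟨ha, hb⟩ := hx
        have h2x : 0 < 2 - x := by linarith
        have hm : (2 - x) * (1/(2-x)) = 1 := by field_simp
        nlinarith [hm, h2x]
    have h1 : f δ = 0 := by simp [hf]; linarith
    have h2 : f l ≥ f δ := hanti ⟨hc.le, hl⟩ ⟨by linarith, le_refl δ⟩ hl
    have : 0 ≤ f l := by linarith
    simpa [hf, sub_nonneg] using this
end

section
/- Let E be a Hermitian positive definite matrix and W a Hermitian positive semidefinite matrix of the same size with λ_max(EW) ≤ δ, where δ is the unique root in (1,2) of x - x² - log(2-x) = 0. Then Tr(EW(I - EW)) ≤ log det(2I - EW). -/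
/-! Write `E = B⋆B`. Then `EW = B⋆(BW)` and `A = BWB⋆` differ by a cyclic permutation of factors,
so they have the same characteristic polynomial, spectrum, `Tr(M(1 - M))` and `det(2 - M)`. The
matrix `A` is Hermitian positive semidefinite with eigenvalues `λᵢ ≤ δ`, so the two sides become
`∑ (λᵢ - λᵢ²)` and `∑ log (2 - λᵢ)`, and everything reduces to `x - x² ≤ log (2 - x)` for `x ≤ δ`.
For `x ≤ 1` this follows from `log y ≥ 1 - 1/y`. On `[1, δ]` the gap `log (2 - x) - (x - x²)`
vanishes at both ends and has derivative `(x - 1)(3 - 2x)/(2 - x)`, so it increases up to `3/2` and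
decreases afterwards. -/

open Matrix
open scoped ComplexOrder
open Set Real

noncomputable def schulzGap (x : ℝ) : ℝ := log (2 - x) - (x - x ^ 2)

lemma hasDerivAt_schulzGap {x : ℝ} (hx : x < 2) :
    HasDerivAt schulzGap ((x - 1) * (3 - 2 * x) / (2 - x)) x := by
  have h2x : 2 - x ≠ 0 := by linarith
  have h := (((hasDerivAt_id x).const_sub 2).log h2x).sub
    ((hasDerivAt_id x).sub (hasDerivAt_pow 2 x))
  refine (h : HasDerivAt schulzGap _ x).congr_deriv ?_
  simp only [id, Nat.cast_ofNat]
  field_simp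
  ring

lemma schulzGap_nonneg_of_le_one {x : ℝ} (hx : x ≤ 1) : 0 ≤ schulzGap x := by
  have h2x : 0 < 2 - x := by linarith
  have hlog := one_sub_inv_le_log_of_pos h2x
  have hcube : 1 - (2 - x)⁻¹ - (x - x ^ 2) = (1 - x) ^ 3 / (2 - x) := by
    field_simp
    ring
  have := div_nonneg (pow_nonneg (sub_nonneg.mpr hx) 3) h2x.le
  unfold schulzGap; linarith

lemma continuousOn_schulzGap : ContinuousOn schulzGap (Iio 2) := fun _ hx =>
  (hasDerivAt_schulzGap hx).continuousAt.continuousWithinAt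

lemma monotoneOn_schulzGap : MonotoneOn schulzGap (Icc 1 (3 / 2)) := by
  refine monotoneOn_of_hasDerivWithinAt_nonneg (convex_Icc _ _)
    (continuousOn_schulzGap.mono fun x hx => show x < 2 by linarith [hx.2])
    (fun x hx => (hasDerivAt_schulzGap ?_).hasDerivWithinAt) fun x hx => ?_
  all_goals rw [interior_Icc] at hx; obtain ⟨h1, h2⟩ := hx
  · linarith
  · apply div_nonneg <;> nlinarith

lemma antitoneOn_schulzGap : AntitoneOn schulzGap (Ico (3 / 2) 2) := by
  refine antitoneOn_of_hasDerivWithinAt_nonpos (convex_Ico _ _)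
    (continuousOn_schulzGap.mono fun x hx => hx.2)
    (fun x hx => (hasDerivAt_schulzGap ?_).hasDerivWithinAt) fun x hx => ?_
  all_goals rw [interior_Ico] at hx; obtain ⟨h1, h2⟩ := hx
  · exact h2
  · apply div_nonpos_of_nonpos_of_nonneg <;> nlinarith

lemma schulzGap_nonneg {δ x : ℝ} (hδ : δ < 2) (hroot : schulzGap δ = 0) (hx : x ≤ δ) :
    0 ≤ schulzGap x := by
  rcases le_total x 1 with hx1 | hx1
  · exact schulzGap_nonneg_of_le_one hx1
  rcases le_total x (3 / 2) with hx2 | hx2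
  · calc 0 ≤ schulzGap 1 := schulzGap_nonneg_of_le_one le_rfl
      _ ≤ schulzGap x := monotoneOn_schulzGap ⟨le_rfl, by norm_num⟩ ⟨hx1, hx2⟩ hx1
  · calc 0 = schulzGap δ := hroot.symm
      _ ≤ schulzGap x := antitoneOn_schulzGap ⟨hx2, hx.trans_lt hδ⟩ ⟨hx2.trans hx, hδ⟩ hx

namespace Matrix

variable {n R : Type*} [Fintype n] [DecidableEq n]

lemma det_smul_one_sub_eq_eval_charpoly [CommRing R] (c : R) (M : Matrix n n R) :
    (c • 1 - M).det = M.charpoly.eval c := by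
  rw [eval_charpoly, scalar_apply, smul_one_eq_diagonal]

lemma det_smul_one_sub_mul_comm [CommRing R] (c : R) (X Y : Matrix n n R) :
    (c • 1 - X * Y).det = (c • 1 - Y * X).det := by
  rw [det_smul_one_sub_eq_eval_charpoly, det_smul_one_sub_eq_eval_charpoly, charpoly_mul_comm]

lemma trace_mul_one_sub_mul_comm [CommRing R] (X Y : Matrix n n R) :
    (X * Y * (1 - X * Y)).trace = (Y * X * (1 - Y * X)).trace := by
  simp only [mul_sub, mul_one, trace_sub, ← mul_assoc]
  rw [trace_mul_comm X Y, trace_mul_comm (X * Y * X) Y]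
  simp only [mul_assoc]

lemma spectrum_mul_comm [Field R] (X Y : Matrix n n R) :
    spectrum R (X * Y) = spectrum R (Y * X) := by
  ext
  simp only [mem_spectrum_iff_isRoot_charpoly, charpoly_mul_comm]

namespace IsHermitian

section RCLike

variable {𝕜 : Type*} [RCLike 𝕜] {A : Matrix n n 𝕜}

lemma trace_cfc (hA : A.IsHermitian) (f : ℝ → ℝ) :
    (cfc f A).trace = ∑ i, (f (hA.eigenvalues i) : 𝕜) := by
  rw [hA.cfc_eq, IsHermitian.cfc, Unitary.conjStarAlgAut_apply, trace_mul_comm, ← mul_assoc,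
    Unitary.coe_star_mul_self, one_mul, trace_diagonal]
  rfl

lemma trace_mul_one_sub (hA : A.IsHermitian) :
    (A * (1 - A)).trace = ((∑ i, (hA.eigenvalues i - hA.eigenvalues i ^ 2) : ℝ) : 𝕜) := by
  have hcfc : cfc (fun x : ℝ => x - x ^ 2) A = A * (1 - A) := by
    rw [cfc_sub .., cfc_pow .., cfc_id' ℝ A hA.isSelfAdjoint]
    noncomm_ring
  rw [← hcfc, hA.trace_cfc, RCLike.ofReal_sum]

lemma det_smul_one_sub (hA : A.IsHermitian) (c : 𝕜) :
    (c • 1 - A).det = ∏ i, (c - hA.eigenvalues i) := by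
  rw [det_smul_one_sub_eq_eval_charpoly, hA.charpoly_eq, Polynomial.eval_prod]
  simp

lemma eigenvalues_mem_spectrum (hA : A.IsHermitian) (i : n) :
    (hA.eigenvalues i : 𝕜) ∈ spectrum 𝕜 A := by
  rw [mem_spectrum_iff_isRoot_charpoly, hA.charpoly_eq, Polynomial.IsRoot, Polynomial.eval_prod]
  exact Finset.prod_eq_zero (Finset.mem_univ i) (by simp)

end RCLike

lemma trace_mul_one_sub_re_le_log_det {A : Matrix n n ℂ} (hA : A.IsHermitian) {δ : ℝ}
    (hδ : δ < 2) (hroot : schulzGap δ = 0) (hle : ∀ i, hA.eigenvalues i ≤ δ) :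
    (A * (1 - A)).trace.re ≤ log (((2 : ℂ) • 1 - A).det.re) := by
  have hpos : ∀ i, 0 < 2 - hA.eigenvalues i := fun i => by linarith [hle i]
  have htrace : (A * (1 - A)).trace.re = ∑ i, (hA.eigenvalues i - hA.eigenvalues i ^ 2) := by
    rw [hA.trace_mul_one_sub]
    exact Complex.ofReal_re _
  have hdet : ((2 : ℂ) • 1 - A).det.re = ∏ i, (2 - hA.eigenvalues i) := by
    rw [hA.det_smul_one_sub, ← Complex.ofReal_re (∏ i, (2 - hA.eigenvalues i))]
    push_cast
    rfl
  rw [htrace, hdet, log_prod fun i _ => (hpos i).ne']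
  refine Finset.sum_le_sum fun i _ => ?_
  have := schulzGap_nonneg hδ hroot (hle i)
  rwa [schulzGap, sub_nonneg] at this

end IsHermitian

end Matrix

/-- If E is Hermitian positive definite, W is Hermitian positive semidefinite, and
every eigenvalue of E*W is at most δ (the unique root of x - x² - log(2-x) = 0 in (1,2)),
then Tr(EW(I - EW)) ≤ log det(2I - EW). -/
theorem schulz_monotone_cost {n : ℕ} (E W : Matrix (Fin n) (Fin n) ℂ)
    (hE : E.PosDef) (hW : W.PosSemidef)
    (δ : ℝ) (hδ : δ ∈ Set.Ioo (1 : ℝ) 2)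
    (hroot : δ - δ ^ 2 - Real.log (2 - δ) = 0)
    (hspec : ∀ μ ∈ spectrum ℂ (E * W), ∃ r : ℝ, 0 ≤ r ∧ r ≤ δ ∧ μ = (r : ℂ)) :
    (E * W * (1 - E * W)).trace.re ≤
      Real.log (((2 : ℂ) • (1 : Matrix (Fin n) (Fin n) ℂ) - E * W).det.re) := by
  open scoped MatrixOrder in
  obtain ⟨B, rfl⟩ := CStarAlgebra.nonneg_iff_eq_star_mul_self.mp hE.posSemidef.nonneg
  have hA : (B * W * Bᴴ).IsHermitian := (hW.mul_mul_conjTranspose_same B).isHermitian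
  have hEW : star B * B * W = Bᴴ * (B * W) := by rw [mul_assoc, star_eq_conjTranspose]
  have hle : ∀ i, hA.eigenvalues i ≤ δ := fun i => by
    have hmem : (hA.eigenvalues i : ℂ) ∈ spectrum ℂ (star B * B * W) := by
      rw [hEW, spectrum_mul_comm]
      exact hA.eigenvalues_mem_spectrum i
    obtain ⟨r, -, hrδ, hr⟩ := hspec _ hmem
    exact (Complex.ofReal_injective hr).le.trans hrδ
  rw [hEW, trace_mul_one_sub_mul_comm, det_smul_one_sub_mul_comm]
  exact hA.trace_mul_one_sub_re_le_log_det hδ.2 (by unfold schulzGap; linarith) hle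
end

section
/- If W is Hermitian positive semidefinite, E is Hermitian positive definite, and λ_max(EW) ≤ 2, then the Schulz update W⁺ = W(2I - EW) = 2W - WEW is Hermitian positive semidefinite. -/
/-!
Factor `W = Bᴴ B`. Then `W (c - E W) = Bᴴ (c - B E Bᴴ) B` is a congruence of the Hermitian matrix
`c - B E Bᴴ`, and `B E Bᴴ` has the same nonzero spectrum as `E Bᴴ B = E W`, so its eigenvalues
are at most `c`; hence `c - B E Bᴴ` is positive semidefinite, and so is its congruence.
-/

open scoped ComplexOrder MatrixOrder

namespace Matrix

variable {n 𝕜 : Type*} [Fintype n] [DecidableEq n] [RCLike 𝕜]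

lemma posSemidef_smul_one_sub_of_spectrum_le {A : Matrix n n 𝕜} (hA : A.IsHermitian) {c : ℝ}
    (hc : ∀ μ ∈ spectrum 𝕜 A, μ ≤ c) : ((c : 𝕜) • 1 - A).PosSemidef := by
  rw [posSemidef_iff_isHermitian_and_spectrum_nonneg]
  refine ⟨(isHermitian_one.smul (RCLike.conj_ofReal c)).sub hA, ?_⟩
  rw [← Algebra.algebraMap_eq_smul_one, ← spectrum.singleton_sub_eq]
  rintro _ ⟨_, rfl, μ, hμ, rfl⟩
  exact sub_nonneg.mpr (hc μ hμ)

lemma spectrum_mul_mul_conjTranspose_subset (B E : Matrix n n 𝕜) :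
    spectrum 𝕜 (B * E * Bᴴ) ⊆ insert 0 (spectrum 𝕜 (E * (Bᴴ * B))) := by
  rw [Set.insert_eq, ← Set.sdiff_subset_iff, mul_assoc, spectrum.nonzero_mul_comm, mul_assoc]
  exact Set.sdiff_subset

lemma conjTranspose_mul_self_mul_smul_one_sub (B E : Matrix n n 𝕜) (c : 𝕜) :
    Bᴴ * B * (c • 1 - E * (Bᴴ * B)) = Bᴴ * (c • 1 - B * E * Bᴴ) * B := by
  simp only [Matrix.mul_sub, Matrix.sub_mul, Matrix.mul_smul, Matrix.smul_mul, mul_one,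
    mul_assoc]

theorem PosSemidef.mul_smul_one_sub_mul {E W : Matrix n n 𝕜} (hE : E.IsHermitian)
    (hW : W.PosSemidef) {c : ℝ} (hc : 0 ≤ c) (hspec : ∀ μ ∈ spectrum 𝕜 (E * W), μ ≤ c) :
    (W * ((c : 𝕜) • 1 - E * W)).PosSemidef := by
  obtain ⟨B, rfl⟩ := CStarAlgebra.nonneg_iff_eq_star_mul_self.mp hW.nonneg
  rw [star_eq_conjTranspose, conjTranspose_mul_self_mul_smul_one_sub]
  have hBEB : (B * E * Bᴴ).IsHermitian := isHermitian_mul_mul_conjTranspose B hE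
  refine (posSemidef_smul_one_sub_of_spectrum_le hBEB fun μ hμ ↦ ?_).conjTranspose_mul_mul_same B
  rcases spectrum_mul_mul_conjTranspose_subset B E hμ with rfl | hμ
  · exact_mod_cast hc
  · exact hspec μ hμ

end Matrix

/-- If W is Hermitian PSD, E is Hermitian positive definite, and λ_max(EW) ≤ 2,
then the Schulz update W⁺ = W(2I - EW) is Hermitian positive semidefinite. -/
theorem schulz_update_psd {n : ℕ} (E W : Matrix (Fin n) (Fin n) ℂ)
    (hE : E.PosDef) (hW : W.PosSemidef)
    (hspec : ∀ μ ∈ spectrum ℂ (E * W), ∃ r : ℝ, 0 ≤ r ∧ r ≤ 2 ∧ μ = (r : ℂ)) :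
    (W * ((2 : ℂ) • (1 : Matrix (Fin n) (Fin n) ℂ) - E * W)).PosSemidef := by
  have hspec_le : ∀ μ ∈ spectrum ℂ (E * W), μ ≤ ((2 : ℝ) : ℂ) := by
    intro μ hμ
    obtain ⟨r, -, hr, rfl⟩ := hspec μ hμ
    exact_mod_cast hr
  simpa using hW.mul_smul_one_sub_mul hE.isHermitian zero_le_two hspec_le
end

section
/- Let H_k ∈ ℂ^{N×M} satisfy ‖H_k‖₂ ≤ √κ, let V₁,...,V_K ∈ ℂ^{M×d} satisfy Σ_m ‖V_m‖_F² ≤ P with Σ_m ‖V_m‖_F² = η > 0, and let U_k ∈ ℂ^{N×d}. Then the matrix E_k = (I - U_k^H H_k V_k)(I - U_k^H H_k V_k)^H + Σ_{m≠k} U_k^H H_k V_m V_m^H H_k^H U_k + (η σ²/P) U_k^H U_k satisfies λ_min(E_k) ≥ σ²/(Pκ + σ²). -/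
/-!
Write `B = Uᴴ H V_k` and `β = σ² / (P κ)`. Completing the square,
`(1 - B)(1 - B)ᴴ + β B Bᴴ - β / (1 + β) • 1 = (1 + β) (B - (1 + β)⁻¹)(B - (1 + β)⁻¹)ᴴ ⪰ 0`,
and `β / (1 + β) = σ² / (P κ + σ²)`. The term `β B Bᴴ` borrowed here is paid for by the noise
term: `‖H‖₂² ≤ κ` and `‖V_k‖₂² ≤ ‖V_k‖_F² ≤ η` give `B Bᴴ ⪯ κ η Uᴴ U`, and `β κ η = η σ² / P`.
The interference terms are positive semidefinite.
-/

open Matrix Finset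
open scoped ComplexOrder
open WithLp
open scoped Matrix.Norms.L2Operator

namespace Matrix

variable {𝕜 m n : Type*} [RCLike 𝕜] [Fintype n]

lemma star_dotProduct_self_eq_norm_sq (x : n → 𝕜) : star x ⬝ᵥ x = (‖toLp 2 x‖ ^ 2 : ℝ) := by
  rw [dotProduct_comm, ← EuclideanSpace.inner_toLp_toLp, inner_self_eq_norm_sq_to_K]
  push_cast
  rfl

lemma star_dotProduct_conjTranspose_mul_self_mulVec [Fintype m] (A : Matrix m n 𝕜) (x : n → 𝕜) :
    star x ⬝ᵥ ((Aᴴ * A) *ᵥ x) = (‖toLp 2 (A *ᵥ x)‖ ^ 2 : ℝ) := by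
  rw [← mulVec_mulVec, dotProduct_mulVec, ← star_mulVec, star_dotProduct_self_eq_norm_sq]

lemma posSemidef_one_sub_mul_conjTranspose_add_smul [DecidableEq n] (B : Matrix n n 𝕜) {β : ℝ}
    (hβ : 0 ≤ β) :
    ((1 - B) * (1 - B)ᴴ + β • (B * Bᴴ) - (β / (1 + β)) • 1).PosSemidef := by
  set C := B - (1 + β)⁻¹ • (1 : Matrix n n 𝕜)
  convert (posSemidef_self_mul_conjTranspose C).smul (by positivity : (0 : ℝ) ≤ 1 + β) using 1
  simp only [C, conjTranspose_sub, conjTranspose_one, conjTranspose_smul, star_trivial,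
    Matrix.sub_mul, Matrix.mul_sub, Matrix.smul_mul, Matrix.mul_smul, Matrix.one_mul,
    Matrix.mul_one, smul_sub, smul_smul]
  have hβ' : 1 + β ≠ 0 := by positivity
  match_scalars <;> field_simp
  ring

variable [Fintype m] [DecidableEq n]

lemma posSemidef_smul_one_sub_conjTranspose_mul_self_iff_forall (A : Matrix m n 𝕜) (c : ℝ) :
    (c • 1 - Aᴴ * A).PosSemidef ↔ ∀ x : n → 𝕜, ‖toLp 2 (A *ᵥ x)‖ ^ 2 ≤ c * ‖toLp 2 x‖ ^ 2 := by
  have hHerm : (c • 1 - Aᴴ * A).IsHermitian :=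
    (isHermitian_one.smul (IsSelfAdjoint.all c)).sub (isHermitian_conjTranspose_mul_self A)
  simp only [posSemidef_iff_dotProduct_mulVec, hHerm, true_and, sub_mulVec, dotProduct_sub,
    smul_mulVec, one_mulVec, dotProduct_smul, star_dotProduct_self_eq_norm_sq,
    star_dotProduct_conjTranspose_mul_self_mulVec]
  refine forall_congr' fun x => ?_
  rw [RCLike.real_smul_eq_coe_smul (K := 𝕜), smul_eq_mul, ← RCLike.ofReal_mul,
    ← RCLike.ofReal_sub, RCLike.ofReal_nonneg, sub_nonneg]

lemma l2_opNorm_sq_le_iff (A : Matrix m n 𝕜) {c : ℝ} (hc : 0 ≤ c) :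
    ‖A‖ ^ 2 ≤ c ↔ ∀ x : n → 𝕜, ‖toLp 2 (A *ᵥ x)‖ ^ 2 ≤ c * ‖toLp 2 x‖ ^ 2 := by
  rw [← Real.le_sqrt (norm_nonneg _) hc, l2_opNorm_def,
    ContinuousLinearMap.opNorm_le_iff (Real.sqrt_nonneg c)]
  have hsq : ∀ x : n → 𝕜, ‖toLp 2 (A *ᵥ x)‖ ≤ √c * ‖toLp 2 x‖ ↔
      ‖toLp 2 (A *ᵥ x)‖ ^ 2 ≤ c * ‖toLp 2 x‖ ^ 2 := fun x => by
    rw [← pow_le_pow_iff_left₀ (norm_nonneg _) (by positivity) two_ne_zero, mul_pow,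
      Real.sq_sqrt hc]
  exact ⟨fun h x => (hsq x).1 (h (toLp 2 x)), fun h x => (hsq x.ofLp).2 (h x.ofLp)⟩

lemma posSemidef_smul_one_sub_conjTranspose_mul_self_iff (A : Matrix m n 𝕜) {c : ℝ}
    (hc : 0 ≤ c) : (c • 1 - Aᴴ * A).PosSemidef ↔ ‖A‖ ^ 2 ≤ c := by
  rw [posSemidef_smul_one_sub_conjTranspose_mul_self_iff_forall, l2_opNorm_sq_le_iff A hc]

lemma l2_opNorm_sq_le_re_trace_mul_conjTranspose (A : Matrix m n 𝕜) :
    ‖A‖ ^ 2 ≤ RCLike.re (A * Aᴴ).trace := by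
  set r : m → EuclideanSpace 𝕜 n := fun i => toLp 2 (star (A i))
  have hdiag : ∀ i, (A * Aᴴ) i i = (‖r i‖ ^ 2 : ℝ) := fun i => by
    rw [← star_dotProduct_self_eq_norm_sq, star_star, mul_apply']
    rfl
  have hrow : ∀ x i, (A *ᵥ x) i = inner 𝕜 (r i) (toLp 2 x) := fun x i => by
    rw [EuclideanSpace.inner_toLp_toLp, star_star, dotProduct_comm]
    rfl
  have htrace : RCLike.re (A * Aᴴ).trace = ∑ i, ‖r i‖ ^ 2 := by
    simp only [trace, diag_apply, hdiag, map_sum, RCLike.ofReal_re]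
  rw [l2_opNorm_sq_le_iff A (htrace ▸ by positivity)]
  intro x
  rw [htrace, EuclideanSpace.norm_sq_eq, sum_mul]
  refine sum_le_sum fun i _ => ?_
  rw [← mul_pow, WithLp.ofLp_toLp, hrow]
  exact pow_le_pow_left₀ (norm_nonneg _) (norm_inner_le_norm _ _) 2

lemma l2_opNorm_sq_le_sum_re_trace_mul_conjTranspose {ι : Type*} [Fintype ι]
    (V : ι → Matrix m n 𝕜) (k : ι) : ‖V k‖ ^ 2 ≤ ∑ i, RCLike.re (V i * (V i)ᴴ).trace :=
  (l2_opNorm_sq_le_re_trace_mul_conjTranspose (V k)).trans <|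
    single_le_sum (f := fun i => RCLike.re (V i * (V i)ᴴ).trace)
      (fun i _ => (RCLike.nonneg_iff.mp (posSemidef_self_mul_conjTranspose (V i)).trace_nonneg).1)
      (mem_univ k)

lemma posSemidef_smul_conjTranspose_mul_self_sub {l : Type*} [Fintype l] [DecidableEq m]
    (U : Matrix m l 𝕜) (G : Matrix m n 𝕜) {c : ℝ} (hG : ‖G‖ ^ 2 ≤ c) :
    (c • (Uᴴ * U) - Uᴴ * G * (Uᴴ * G)ᴴ).PosSemidef := by
  have hadj : (c • 1 - Gᴴᴴ * Gᴴ).PosSemidef :=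
    (posSemidef_smul_one_sub_conjTranspose_mul_self_iff Gᴴ ((sq_nonneg _).trans hG)).2
      (by rwa [l2_opNorm_conjTranspose])
  refine (congrArg PosSemidef ?_).mp (hadj.conjTranspose_mul_mul_same U)
  simp only [conjTranspose_conjTranspose, conjTranspose_mul, Matrix.sub_mul, Matrix.mul_sub,
    Matrix.mul_smul, Matrix.smul_mul, Matrix.mul_one, Matrix.mul_assoc]

end Matrix

theorem Emat_min_eig_lower_bound_general {M N d K : ℕ}
    (H : Matrix (Fin N) (Fin M) ℂ) (V : Fin K → Matrix (Fin M) (Fin d) ℂ)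
    (U : Matrix (Fin N) (Fin d) ℂ) (k : Fin K) (σ P κ η : ℝ)
    (hP : 0 < P) (hκ : 0 < κ)
    (hH : ((κ : ℂ) • (1 : Matrix (Fin M) (Fin M) ℂ) - Hᴴ * H).PosSemidef)
    (hη : η = ∑ m, ((V m * (V m)ᴴ).trace).re) :
    ((1 - Uᴴ * H * V k) * (1 - Uᴴ * H * V k)ᴴ +
      (∑ m ∈ Finset.univ.erase k, Uᴴ * H * V m * (V m)ᴴ * Hᴴ * U) +
      ((η * σ ^ 2 / P : ℝ) : ℂ) • (Uᴴ * U) -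
      ((σ ^ 2 / (P * κ + σ ^ 2) : ℝ) : ℂ) • (1 : Matrix (Fin d) (Fin d) ℂ)).PosSemidef := by
  set β := σ ^ 2 / (P * κ)
  have hβ : 0 ≤ β := by positivity
  have hnormH : ‖H‖ ^ 2 ≤ κ :=
    (posSemidef_smul_one_sub_conjTranspose_mul_self_iff H hκ.le).1 (by rwa [← Complex.coe_smul])
  have hnormV : ‖V k‖ ^ 2 ≤ η := by
    rw [hη]
    exact l2_opNorm_sq_le_sum_re_trace_mul_conjTranspose V k
  have hnormHV : ‖H * V k‖ ^ 2 ≤ κ * η :=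
    calc ‖H * V k‖ ^ 2 ≤ (‖H‖ * ‖V k‖) ^ 2 := by gcongr; exact l2_opNorm_mul H (V k)
      _ = ‖H‖ ^ 2 * ‖V k‖ ^ 2 := mul_pow _ _ _
      _ ≤ κ * η := by gcongr
  have hBB := posSemidef_smul_conjTranspose_mul_self_sub U (H * V k) hnormHV
  rw [← Matrix.mul_assoc] at hBB
  have hinterference : ∑ m ∈ univ.erase k, Uᴴ * H * V m * (V m)ᴴ * Hᴴ * U =
      ∑ m ∈ univ.erase k, Uᴴ * H * V m * (Uᴴ * H * V m)ᴴ :=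
    sum_congr rfl fun m _ => by
      simp only [conjTranspose_mul, conjTranspose_conjTranspose, Matrix.mul_assoc]
  have hshift : β / (1 + β) = σ ^ 2 / (P * κ + σ ^ 2) := by
    simp only [β]
    field_simp
  have hscale : β * (κ * η) = η * σ ^ 2 / P := by
    simp only [β]
    field_simp
  rw [Complex.coe_smul, Complex.coe_smul, hinterference, ← hshift, ← hscale]
  refine (congrArg PosSemidef ?_).mp
    (((posSemidef_one_sub_mul_conjTranspose_add_smul (Uᴴ * H * V k) hβ).add
      (posSemidef_sum (univ.erase k) fun m _ =>
        posSemidef_self_mul_conjTranspose (Uᴴ * H * V m))).add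
      (hBB.smul hβ))
  module

/-- Lower bound on the minimum eigenvalue of the MSE matrix E_k:
if σ_max(H_kᴴH_k) ≤ κ and Σ_m ‖V_m‖_F² = η with 0 < η ≤ P, then
λ_min(E_k) ≥ σ²/(Pκ + σ²), expressed as E_k - (σ²/(Pκ+σ²)) I being PSD. -/
theorem Emat_min_eig_lower_bound {M N d K : ℕ}
    (H : Matrix (Fin N) (Fin M) ℂ) (V : Fin K → Matrix (Fin M) (Fin d) ℂ)
    (U : Matrix (Fin N) (Fin d) ℂ) (k : Fin K) (σ P κ η : ℝ)
    (hσ : 0 < σ) (hP : 0 < P) (hκ : 0 < κ)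
    (hH : ((κ : ℂ) • (1 : Matrix (Fin M) (Fin M) ℂ) - Hᴴ * H).PosSemidef)
    (hη : η = ∑ m, ((V m * (V m)ᴴ).trace).re) (hηpos : 0 < η) (hηP : η ≤ P) :
    ((1 - Uᴴ * H * V k) * (1 - Uᴴ * H * V k)ᴴ +
      (∑ m ∈ Finset.univ.erase k, Uᴴ * H * V m * (V m)ᴴ * Hᴴ * U) +
      ((η * σ ^ 2 / P : ℝ) : ℂ) • (Uᴴ * U) -
      ((σ ^ 2 / (P * κ + σ ^ 2) : ℝ) : ℂ) • (1 : Matrix (Fin d) (Fin d) ℂ)).PosSemidef :=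
  Emat_min_eig_lower_bound_general H V U k σ P κ η hP hκ hH hη
end

section
/- Let A be an m×n complex matrix with ‖A‖₂ ≤ √κ and x, b vectors with ‖x‖ = 1. Then ‖x - A^H b‖² + c‖b‖² ≥ c/(c + κ) for any c > 0, where the minimum over ‖b‖ of the lower bound (1 - √κ‖b‖)₊² + c‖b‖² equals c/(c+κ). -/
/-!
The hypothesis says that the spectral norm of `A`, hence that of `Aᴴ`, is at most `√κ`, so
`‖Aᴴ b‖ ≤ √κ ‖b‖` and the triangle inequality gives `u + √κ t ≥ 1` for `u = ‖x - Aᴴ b‖`,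
`t = ‖b‖`. Under this constraint Cauchy–Schwarz gives `u² + c t² ≥ c / (c + κ)`, with equality
at `t = √κ / (c + κ)`, `u = 1 - √κ t`.
-/

open Matrix WithLp
open scoped ComplexOrder

section

variable {𝕜 : Type*} [RCLike 𝕜] {m n : Type*} [Fintype m] [Fintype n]

lemma re_star_dotProduct_self (v : n → 𝕜) : RCLike.re (star v ⬝ᵥ v) = ‖toLp 2 v‖ ^ 2 := by
  rw [← inner_self_eq_norm_sq (𝕜 := 𝕜), EuclideanSpace.inner_eq_star_dotProduct, dotProduct_comm]

lemma norm_mulVec_sq_le_of_posSemidef [DecidableEq n] (A : Matrix m n 𝕜) {κ : ℝ}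
    (hA : ((κ : 𝕜) • (1 : Matrix n n 𝕜) - Aᴴ * A).PosSemidef) (v : n → 𝕜) :
    ‖toLp 2 (A *ᵥ v)‖ ^ 2 ≤ κ * ‖toLp 2 v‖ ^ 2 := by
  have h := hA.re_dotProduct_nonneg v
  rw [sub_mulVec, smul_mulVec, one_mulVec, ← mulVec_mulVec, dotProduct_sub, dotProduct_smul,
    dotProduct_mulVec, ← star_mulVec, map_sub, smul_eq_mul, RCLike.re_ofReal_mul,
    re_star_dotProduct_self, re_star_dotProduct_self] at h
  linarith

open scoped Matrix.Norms.L2Operator in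
lemma l2_opNorm_le_sqrt_of_posSemidef [DecidableEq n] (A : Matrix m n 𝕜) {κ : ℝ}
    (hA : ((κ : 𝕜) • (1 : Matrix n n 𝕜) - Aᴴ * A).PosSemidef) : ‖A‖ ≤ √κ := by
  refine ContinuousLinearMap.opNorm_le_bound _ (Real.sqrt_nonneg κ) fun v => ?_
  rw [← Real.sqrt_sq (norm_nonneg v), ← Real.sqrt_mul' _ (sq_nonneg _),
    ← Real.sqrt_sq (norm_nonneg _)]
  exact Real.sqrt_le_sqrt (norm_mulVec_sq_le_of_posSemidef A hA v)

open scoped Matrix.Norms.L2Operator in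
lemma norm_conjTranspose_mulVec_le_of_posSemidef [DecidableEq m] [DecidableEq n]
    (A : Matrix m n 𝕜) {κ : ℝ}
    (hA : ((κ : 𝕜) • (1 : Matrix n n 𝕜) - Aᴴ * A).PosSemidef) (b : EuclideanSpace 𝕜 m) :
    ‖toLp 2 (Aᴴ *ᵥ ofLp b)‖ ≤ √κ * ‖b‖ :=
  calc ‖toLp 2 (Aᴴ *ᵥ ofLp b)‖ ≤ ‖Aᴴ‖ * ‖b‖ := Aᴴ.l2_opNorm_mulVec b
    _ = ‖A‖ * ‖b‖ := by rw [l2_opNorm_conjTranspose]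
    _ ≤ √κ * ‖b‖ := by gcongr; exact l2_opNorm_le_sqrt_of_posSemidef A hA

lemma div_add_sq_le_sq_add_mul_sq {u s t c : ℝ} (hc : 0 < c) (h : 1 ≤ u + s * t) :
    c / (c + s ^ 2) ≤ u ^ 2 + c * t ^ 2 := by
  rw [div_le_iff₀ (by positivity)]
  have h1 : c ≤ c * (u + s * t) ^ 2 := le_mul_of_one_le_right hc.le (one_le_pow₀ h)
  -- `(u² + c t²) (c + s²) - c (u + s t)² = (s u - c t)²`
  nlinarith [sq_nonneg (s * u - c * t)]

lemma div_add_le_norm_sub_conjTranspose_mulVec_sq_add [DecidableEq m] [DecidableEq n]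
    (A : Matrix m n 𝕜) {κ c : ℝ} (hκ : 0 ≤ κ) (hc : 0 < c)
    (hA : ((κ : 𝕜) • (1 : Matrix n n 𝕜) - Aᴴ * A).PosSemidef) (x : EuclideanSpace 𝕜 n)
    (hx : ‖x‖ = 1) (b : EuclideanSpace 𝕜 m) :
    c / (c + κ) ≤ ‖x - toLp 2 (Aᴴ *ᵥ ofLp b)‖ ^ 2 + c * ‖b‖ ^ 2 := by
  have h1 : 1 ≤ ‖x - toLp 2 (Aᴴ *ᵥ ofLp b)‖ + √κ * ‖b‖ :=
    calc 1 = ‖x‖ := hx.symm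
      _ ≤ ‖x - toLp 2 (Aᴴ *ᵥ ofLp b)‖ + ‖toLp 2 (Aᴴ *ᵥ ofLp b)‖ := norm_le_norm_sub_add _ _
      _ ≤ _ := by gcongr; exact norm_conjTranspose_mulVec_le_of_posSemidef A hA b
  simpa only [Real.sq_sqrt hκ] using div_add_sq_le_sq_add_mul_sq hc h1

end

lemma isLeast_sq_max_one_sub_add_mul_sq {κ c : ℝ} (hκ : 0 ≤ κ) (hc : 0 < c) :
    IsLeast {y : ℝ | ∃ t : ℝ, 0 ≤ t ∧ y = (max (1 - √κ * t) 0) ^ 2 + c * t ^ 2} (c / (c + κ)) := by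
  have hs : √κ ^ 2 = κ := Real.sq_sqrt hκ
  refine ⟨⟨√κ / (c + κ), by positivity, ?_⟩, ?_⟩
  · have hmax : 1 - √κ * (√κ / (c + κ)) = c / (c + κ) := by
      field_simp
      rw [hs]
      ring
    rw [hmax, max_eq_left (by positivity)]
    field_simp
    rw [hs]
  · rintro y ⟨t, -, rfl⟩
    have h : 1 ≤ max (1 - √κ * t) 0 + √κ * t := by linarith [le_max_left (1 - √κ * t) 0]
    simpa only [hs] using div_add_sq_le_sq_add_mul_sq hc h

/-- Core estimate: if ‖A‖₂ ≤ √κ (i.e. κI - AᴴA ⪰ 0), x is a unit vector and b arbitrary,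
then ‖x - Aᴴb‖² + c‖b‖² ≥ c/(c+κ); moreover the minimum over t = ‖b‖ ≥ 0 of the lower
bound (max(1 - √κ t, 0))² + c t² is exactly c/(c+κ). -/
theorem core_quadratic_estimate {m n : ℕ} (A : Matrix (Fin m) (Fin n) ℂ)
    (κ c : ℝ) (hκ : 0 < κ) (hc : 0 < c)
    (hA : ((κ : ℂ) • (1 : Matrix (Fin n) (Fin n) ℂ) - Aᴴ * A).PosSemidef) :
    (∀ (x : Fin n → ℂ) (b : Fin m → ℂ), (∑ i, ‖x i‖ ^ 2) = 1 →
      c / (c + κ) ≤ (∑ i, ‖(x - Aᴴ.mulVec b) i‖ ^ 2) + c * ∑ i, ‖b i‖ ^ 2) ∧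
    IsLeast {y : ℝ | ∃ t : ℝ, 0 ≤ t ∧
      y = (max (1 - Real.sqrt κ * t) 0) ^ 2 + c * t ^ 2} (c / (c + κ)) := by
  refine ⟨fun x b hx => ?_, isLeast_sq_max_one_sub_add_mul_sq hκ.le hc⟩
  have hx' : ‖toLp 2 x‖ = 1 := by
    rw [EuclideanSpace.norm_eq]
    simp [hx]
  have h := div_add_le_norm_sub_conjTranspose_mulVec_sq_add A hκ.le hc hA _ hx' (toLp 2 b)
  rwa [← toLp_sub, EuclideanSpace.norm_sq_eq, EuclideanSpace.norm_sq_eq] at h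
end
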